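/- Let N ≥ 1 and I = {0,1,…,N}, let P be an irreducible stochastic matrix on I that is monotone (for every y and x < N, Σ_{z≤y} P(x+1,z) ≤ Σ_{z≤y} P(x,z)), with stationary distribution π, and let P̂ be the Siegmund dual: P̂(y,x) = Σ_{z≤y} P(x,z) − Σ_{z≤y} P(x+1,z) for x < N, P̂(y,N) = Σ_{z≤y} P(N,z). Write π^c(x) := Σ_{y≤x} π(y) for the cumulative distribution of π. Then: (a) H_Sᵀ·π = π^c, where H_S(x,y) = 1 if x ≤ y and 0 otherwise; (b) the matrix Λ defined by Λ(x,y) = π(y)/π^c(x) if y ≤ x and 0 otherwise is stochastic; (c) the matrix P̃ defined by P̃(x,y) = P̂(x,y)·π^c(y)/π^c(x) is stochastic and satisfies P̃·Λ = Λ·←P, where ←P(x,y) = π(y)·P(y,x)/π(x); (d) Λ(x,N) = π(N) if x = N and Λ(x,N) = 0 if x < N, i.e. Λ·e_N = π(N)·e_N. -/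

import Mathlib

open Matrix Finset

/-- The reversed kernel `←P(x,y) = π(y)·P(y,x)/π(x)`. -/
noncomputable def revKernel {I : Type*} (P : Matrix I I ℝ) (π : I → ℝ) : Matrix I I ℝ :=
  Matrix.of fun x y => π y * P y x / π x

/-- The Siegmund dual of `P`. -/
noncomputable def siegmundDual (N : ℕ) (P : Matrix (Fin (N+1)) (Fin (N+1)) ℝ) :
    Matrix (Fin (N+1)) (Fin (N+1)) ℝ :=
  Matrix.of fun y x =>
    if (x : ℕ) < N then
      (∑ z ∈ Finset.Iic y, P x z) - ∑ z ∈ Finset.Iic y, P (x + 1) z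
    else ∑ z ∈ Finset.Iic y, P x z


/-!
The Siegmund dual satisfies the duality relation `∑_{c ≥ b} P̂(a,c) = ∑_{c ≤ a} P(b,c)`, because
the differences defining `P̂` telescope. Summing it against the stationary `π` shows that `π^c` is
harmonic for `P̂`, so `P̃` is the Doob transform of `P̂` by `π^c` and hence stochastic;
monotonicity of `P` is exactly the nonnegativity of `P̂`. At the entry `(a,b)`, after cancelling
`π^c(c)` resp. `π(c)`, the two sides of `P̃·Λ = Λ·←P` are `π(b)/π^c(a)` times the two sides of the
duality relation.
-/

theorem Fin.Ioi_castSucc_eq_Ici_succ {n : ℕ} (i : Fin n) : Ioi i.castSucc = Ici i.succ := by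
  ext c; simp [Fin.castSucc_lt_iff_succ_le]

theorem Fin.sum_Ici_sub_succ {M : Type*} [AddCommGroup M] {N : ℕ} (g : Fin (N+1) → M) (b : Fin (N+1)) :
    ∑ c ∈ Ici b, (if (c : ℕ) < N then g c - g (c + 1) else g c) = g b := by
  induction b using Fin.reverseInduction with
  | last => simp [← Fin.top_eq_last, Ici_top]
  | cast i ih =>
    rw [Ici_eq_cons_Ioi, Finset.sum_cons, Fin.Ioi_castSucc_eq_Ici_succ, ih,
      if_pos (Fin.val_castSucc i ▸ i.isLt), Fin.coeSucc_eq_succ, sub_add_cancel]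

noncomputable def doobTransform {ι : Type*} (Q : Matrix ι ι ℝ) (h : ι → ℝ) : Matrix ι ι ℝ :=
  of fun x y => Q x y * h y / h x

theorem doobTransform_nonneg {ι : Type*} {Q : Matrix ι ι ℝ} {h : ι → ℝ}
    (hQ : ∀ x y, 0 ≤ Q x y) (hh : ∀ x, 0 < h x) (x y : ι) : 0 ≤ doobTransform Q h x y :=
  div_nonneg (mul_nonneg (hQ x y) (hh y).le) (hh x).le

theorem sum_doobTransform {ι : Type*} [Fintype ι] {Q : Matrix ι ι ℝ} {h : ι → ℝ}
    (hh : ∀ x, h x ≠ 0) (hQh : Q *ᵥ h = h) (x : ι) : ∑ y, doobTransform Q h x y = 1 := by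
  simp only [doobTransform, of_apply, ← sum_div]
  rw [← div_self (hh x)]
  exact congrArg (· / h x) (congrFun hQh x)

section CumulativeSums

variable {ι : Type*} [LinearOrder ι] [LocallyFiniteOrderBot ι]

noncomputable def cumSum (π : ι → ℝ) (x : ι) : ℝ := ∑ y ∈ Iic x, π y

/-- Row `x` of `linkKernel π` is `π` conditioned on `Iic x`. -/
noncomputable def linkKernel (π : ι → ℝ) : Matrix ι ι ℝ :=
  of fun x y => if y ≤ x then π y / cumSum π x else 0

theorem cumSum_pos {π : ι → ℝ} (hπ : ∀ x, 0 < π x) (x : ι) : 0 < cumSum π x :=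
  sum_pos (fun y _ => hπ y) nonempty_Iic

theorem linkKernel_nonneg {π : ι → ℝ} (hπ : ∀ x, 0 < π x) (x y : ι) : 0 ≤ linkKernel π x y := by
  rw [linkKernel, of_apply]
  split_ifs
  · exact div_nonneg (hπ y).le (cumSum_pos hπ x).le
  · exact le_rfl

variable [Fintype ι]

theorem cumSum_top [OrderTop ι] (π : ι → ℝ) : cumSum π ⊤ = ∑ x, π x := by
  simp [cumSum, Iic_top]

theorem transpose_upperOnes_mulVec (π : ι → ℝ) :
    (of fun x y : ι => if x ≤ y then (1 : ℝ) else 0)ᵀ *ᵥ π = cumSum π := by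
  ext x
  simp [mulVec, dotProduct, cumSum, ← sum_filter, filter_ge_eq_Iic]

theorem sum_linkKernel {π : ι → ℝ} (hπ : ∀ x, 0 < π x) (x : ι) : ∑ y, linkKernel π x y = 1 := by
  simp only [linkKernel, of_apply, ← sum_filter, filter_ge_eq_Iic, ← sum_div]
  exact div_self (cumSum_pos hπ x).ne'

theorem linkKernel_apply_top [OrderTop ι] {π : ι → ℝ} (hπ1 : ∑ x, π x = 1) (x : ι) :
    linkKernel π x ⊤ = if x = ⊤ then π ⊤ else 0 := by
  by_cases hx : x = ⊤
  · simp [linkKernel, hx, cumSum_top, hπ1]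
  · simp [linkKernel, hx, top_le_iff]

variable [LocallyFiniteOrderTop ι]

theorem mulVec_cumSum_of_sum_Ici {Q P : Matrix ι ι ℝ} {π : ι → ℝ}
    (hQP : ∀ a b, ∑ c ∈ Ici b, Q a c = ∑ c ∈ Iic a, P b c) (hπP : π ᵥ* P = π) :
    Q *ᵥ cumSum π = cumSum π := by
  ext a
  calc (Q *ᵥ cumSum π) a = ∑ c, ∑ b ∈ Iic c, Q a c * π b := by
        simp only [mulVec, dotProduct, cumSum, mul_sum]
    _ = ∑ b, (∑ c ∈ Ici b, Q a c) * π b := by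
        rw [sum_comm' (t' := univ) (s' := Ici) (fun c b => by simp)]
        simp only [sum_mul]
    _ = ∑ c ∈ Iic a, ∑ b, π b * P b c := by
        simp only [hQP, sum_mul]
        rw [sum_comm]
        simp only [mul_comm]
    _ = cumSum π a := sum_congr rfl fun c _ => congrFun hπP c

theorem doobTransform_mul_linkKernel {Q P : Matrix ι ι ℝ} {π : ι → ℝ} (hπ : ∀ x, 0 < π x)
    (hQP : ∀ a b, ∑ c ∈ Ici b, Q a c = ∑ c ∈ Iic a, P b c) :
    doobTransform Q (cumSum π) * linkKernel π = linkKernel π * revKernel P π := by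
  ext a b
  have hπa := (cumSum_pos hπ a).ne'
  calc (doobTransform Q (cumSum π) * linkKernel π) a b
      = ∑ c ∈ Ici b, Q a c * (π b / cumSum π a) := by
        simp only [mul_apply, doobTransform, linkKernel, of_apply, mul_ite, mul_zero,
          ← sum_filter, filter_le_eq_Ici]
        refine sum_congr rfl fun c _ => ?_
        field_simp [(cumSum_pos hπ c).ne']
    _ = ∑ c ∈ Iic a, P b c * (π b / cumSum π a) := by rw [← sum_mul, hQP, sum_mul]
    _ = (linkKernel π * revKernel P π) a b := by
        simp only [mul_apply, revKernel, linkKernel, of_apply, ite_mul, zero_mul,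
          ← sum_filter, filter_ge_eq_Iic]
        refine sum_congr rfl fun c _ => ?_
        field_simp [(hπ c).ne']

end CumulativeSums

theorem sum_Ici_siegmundDual {N : ℕ} (P : Matrix (Fin (N+1)) (Fin (N+1)) ℝ) (a b : Fin (N+1)) :
    ∑ c ∈ Ici b, siegmundDual N P a c = ∑ c ∈ Iic a, P b c :=
  Fin.sum_Ici_sub_succ (fun c => ∑ z ∈ Iic a, P c z) b

theorem siegmundDual_nonneg {N : ℕ} {P : Matrix (Fin (N+1)) (Fin (N+1)) ℝ}
    (hP0 : ∀ x y, 0 ≤ P x y)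
    (hmono : ∀ y x : Fin (N+1), (x : ℕ) < N →
      ∑ z ∈ Iic y, P (x + 1) z ≤ ∑ z ∈ Iic y, P x z) (y x : Fin (N+1)) :
    0 ≤ siegmundDual N P y x := by
  rw [siegmundDual, of_apply]
  split_ifs with hx
  · exact sub_nonneg.mpr (hmono y x hx)
  · exact sum_nonneg fun z _ => hP0 x z

theorem stmt10_general (N : ℕ) (P : Matrix (Fin (N+1)) (Fin (N+1)) ℝ)
    (π : Fin (N+1) → ℝ)
    (hP0 : ∀ x y, 0 ≤ P x y)
    (hπpos : ∀ x, 0 < π x) (hπ1 : ∑ x, π x = 1)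
    (hπP : ∀ y, ∑ x, π x * P x y = π y)
    (hmono : ∀ y x : Fin (N+1), (x : ℕ) < N →
      ∑ z ∈ Finset.Iic y, P (x + 1) z ≤ ∑ z ∈ Finset.Iic y, P x z) :
    let HS : Matrix (Fin (N+1)) (Fin (N+1)) ℝ :=
      Matrix.of fun x y => if x ≤ y then 1 else 0
    let Phat := siegmundDual N P
    let πc : Fin (N+1) → ℝ := fun x => ∑ y ∈ Finset.Iic x, π y
    let Λ : Matrix (Fin (N+1)) (Fin (N+1)) ℝ :=
      Matrix.of fun x y => if y ≤ x then π y / πc x else 0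
    let Ptil : Matrix (Fin (N+1)) (Fin (N+1)) ℝ :=
      Matrix.of fun x y => Phat x y * πc y / πc x
    HSᵀ.mulVec π = πc ∧
    ((∀ x y, 0 ≤ Λ x y) ∧ (∀ x, ∑ y, Λ x y = 1)) ∧
    ((∀ x y, 0 ≤ Ptil x y) ∧ (∀ x, ∑ y, Ptil x y = 1) ∧
      Ptil * Λ = Λ * revKernel P π) ∧
    (∀ x, Λ x (Fin.last N) = if x = Fin.last N then π (Fin.last N) else 0) := by
  intro HS Phat πc Λ Ptil
  have hdual := sum_Ici_siegmundDual P
  have hπcpos : ∀ x, 0 < cumSum π x := cumSum_pos hπpos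
  refine ⟨transpose_upperOnes_mulVec π,
    ⟨linkKernel_nonneg hπpos, sum_linkKernel hπpos⟩,
    ⟨doobTransform_nonneg (siegmundDual_nonneg hP0 hmono) hπcpos,
      sum_doobTransform (fun x => (hπcpos x).ne') (mulVec_cumSum_of_sum_Ici hdual (funext hπP)),
      doobTransform_mul_linkKernel hπpos hdual⟩, ?_⟩
  exact Fin.top_eq_last N ▸ linkKernel_apply_top hπ1

/-- Corollary coro21 (ii)–(iv): for a monotone irreducible stochastic kernel `P`
with stationary distribution `π`: (a) `H_Sᵀ·π = π^c`; (b) `Λ(x,y) = 1{y≤x}·π(y)/π^c(x)`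
is stochastic; (c) `P̃(x,y) = P̂(x,y)·π^c(y)/π^c(x)` is stochastic and `P̃·Λ = Λ·←P`;
(d) `Λ·e_N = π(N)·e_N`. -/
theorem stmt10 (N : ℕ) (hN : 1 ≤ N) (P : Matrix (Fin (N+1)) (Fin (N+1)) ℝ)
    (π : Fin (N+1) → ℝ)
    (hP0 : ∀ x y, 0 ≤ P x y) (hP1 : ∀ x, ∑ y, P x y = 1)
    (hirr : ∀ x y, ∃ n ≥ 1, 0 < (P ^ n) x y)
    (hπpos : ∀ x, 0 < π x) (hπ1 : ∑ x, π x = 1)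
    (hπP : ∀ y, ∑ x, π x * P x y = π y)
    (hmono : ∀ y x : Fin (N+1), (x : ℕ) < N →
      ∑ z ∈ Finset.Iic y, P (x + 1) z ≤ ∑ z ∈ Finset.Iic y, P x z) :
    let HS : Matrix (Fin (N+1)) (Fin (N+1)) ℝ :=
      Matrix.of fun x y => if x ≤ y then 1 else 0
    let Phat := siegmundDual N P
    let πc : Fin (N+1) → ℝ := fun x => ∑ y ∈ Finset.Iic x, π y
    let Λ : Matrix (Fin (N+1)) (Fin (N+1)) ℝ :=
      Matrix.of fun x y => if y ≤ x then π y / πc x else 0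
    let Ptil : Matrix (Fin (N+1)) (Fin (N+1)) ℝ :=
      Matrix.of fun x y => Phat x y * πc y / πc x
    HSᵀ.mulVec π = πc ∧
    ((∀ x y, 0 ≤ Λ x y) ∧ (∀ x, ∑ y, Λ x y = 1)) ∧
    ((∀ x y, 0 ≤ Ptil x y) ∧ (∀ x, ∑ y, Ptil x y = 1) ∧
      Ptil * Λ = Λ * revKernel P π) ∧
    (∀ x, Λ x (Fin.last N) = if x = Fin.last N then π (Fin.last N) else 0) :=
  stmt10_general N P π hP0 hπpos hπ1 hπP hmono
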